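/- arXiv:2001.03980 — 8 statements merged into one kernel-verified Lean document; each statement's English description precedes it below -/
import Mathlib

section
/- For every b with 0 < b < 2/π and every nonnegative integer n, the equation ω = b·tan(ωπ/2) has exactly one solution ω in the open interval (2n, 2n+1). -/
/-!
Substituting `ω = 2n + 2θ/π` and using the `π`-periodicity of `tan`, the equation becomes
`θ + nπ = (bπ/2) tan θ` with `θ ∈ (0, π/2)`. There `θ ↦ (θ + nπ) / tan θ` is strictly decreasing,
its derivative having the sign of `sin θ cos θ - θ - nπ < 0`; this gives uniqueness.
For existence, `g θ = (θ + nπ) cos θ - (bπ/2) sin θ` has `g 0 = nπ ≥ 0` and `g' 0 = 1 - bπ/2 > 0`,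
so it is positive just to the right of `0`, while `g (π/2) = -bπ/2 < 0`.
-/

open Real Set Filter Topology

theorem HasDerivWithinAt.eventually_lt_right {f : ℝ → ℝ} {f' a : ℝ}
    (hf : HasDerivWithinAt f f' (Ioi a) a) (hf' : 0 < f') : ∀ᶠ x in 𝓝[>] a, f a < f x := by
  have hslope := (hasDerivWithinAt_iff_tendsto_slope' (lt_irrefl a)).1 hf
  filter_upwards [hslope.eventually (eventually_gt_nhds hf'), self_mem_nhdsWithin]
    with x hx_slope hx
  exact (slope_pos_iff_of_le (le_of_lt hx)).1 hx_slope

theorem cos_pos_of_mem_Ioo_zero_pi_div_two {θ : ℝ} (hθ : θ ∈ Ioo 0 (π / 2)) : 0 < cos θ :=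
  cos_pos_of_mem_Ioo ⟨by linarith [hθ.1, pi_pos], hθ.2⟩

theorem strictAntiOn_add_div_tan {c : ℝ} (hc : 0 ≤ c) :
    StrictAntiOn (fun θ => (θ + c) / tan θ) (Ioo 0 (π / 2)) := by
  have htan : ∀ θ ∈ Ioo 0 (π / 2), 0 < tan θ := fun θ hθ =>
    tan_pos_of_pos_of_lt_pi_div_two hθ.1 hθ.2
  have hderiv : ∀ θ ∈ Ioo 0 (π / 2), HasDerivAt (fun θ => (θ + c) / tan θ)
      ((1 * tan θ - (θ + c) * (1 / cos θ ^ 2)) / tan θ ^ 2) θ := fun θ hθ =>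
    ((hasDerivAt_id θ).add_const c).div
      (hasDerivAt_tan (cos_pos_of_mem_Ioo_zero_pi_div_two hθ).ne') (htan θ hθ).ne'
  refine strictAntiOn_of_hasDerivWithinAt_neg (convex_Ioo _ _)
    (fun θ hθ => (hderiv θ hθ).continuousAt.continuousWithinAt)
    (fun θ hθ => (hderiv θ (interior_subset hθ)).hasDerivWithinAt) fun θ hθ => ?_
  rw [interior_Ioo] at hθ
  have hcos := cos_pos_of_mem_Ioo_zero_pi_div_two hθ
  have hsin := sin_pos_of_pos_of_lt_pi hθ.1 (by linarith [hθ.2, pi_pos])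
  have hsin_cos : sin θ * cos θ < θ + c := calc
    sin θ * cos θ ≤ sin θ := mul_le_of_le_one_right hsin.le (cos_le_one θ)
    _ < θ := sin_lt hθ.1
    _ ≤ θ + c := le_add_of_nonneg_right hc
  have hnum : 1 * tan θ - (θ + c) * (1 / cos θ ^ 2) = (sin θ * cos θ - (θ + c)) / cos θ ^ 2 := by
    rw [tan_eq_sin_div_cos]
    field_simp
  rw [hnum]
  exact div_neg_of_neg_of_pos (div_neg_of_neg_of_pos (sub_neg.2 hsin_cos) (by positivity))
    (pow_pos (htan θ hθ) 2)

theorem exists_add_eq_mul_tan {a c : ℝ} (ha₀ : 0 < a) (ha : a < 1) (hc : 0 ≤ c) :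
    ∃ θ ∈ Ioo 0 (π / 2), θ + c = a * tan θ := by
  set g : ℝ → ℝ := fun θ => (θ + c) * cos θ - a * sin θ
  have hg_deriv : HasDerivAt g (1 - a) 0 := by
    simpa using (((hasDerivAt_id' 0).add_const c).fun_mul (hasDerivAt_cos 0)).fun_sub
      ((hasDerivAt_sin 0).const_mul a)
  obtain ⟨δ, hgδ, hδ⟩ :=
    ((hg_deriv.hasDerivWithinAt.eventually_lt_right (sub_pos.2 ha)).and
      (Ioo_mem_nhdsGT (half_pos pi_pos))).exists
  have hg_ends : 0 ∈ Ioo (g (π / 2)) (g δ) := by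
    simp only [g, cos_pi_div_two, sin_pi_div_two, cos_zero, sin_zero] at hgδ ⊢
    constructor <;> linarith
  obtain ⟨θ, hθδ, hgθ⟩ := intermediate_value_Ioo' hδ.2.le (by fun_prop) hg_ends
  have hθ : θ ∈ Ioo 0 (π / 2) := ⟨hδ.1.trans hθδ.1, hθδ.2⟩
  refine ⟨θ, hθ, ?_⟩
  rw [tan_eq_sin_div_cos, mul_div_assoc', eq_div_iff (cos_pos_of_mem_Ioo_zero_pi_div_two hθ).ne']
  linarith [hgθ]

theorem existsUnique_add_eq_mul_tan {a c : ℝ} (ha₀ : 0 < a) (ha : a < 1) (hc : 0 ≤ c) :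
    ∃! θ, θ ∈ Ioo 0 (π / 2) ∧ θ + c = a * tan θ := by
  obtain ⟨θ, hθ, hθ_eq⟩ := exists_add_eq_mul_tan ha₀ ha hc
  refine ⟨θ, ⟨hθ, hθ_eq⟩, fun φ ⟨hφ, hφ_eq⟩ => (strictAntiOn_add_div_tan hc).injOn hφ hθ ?_⟩
  have htan_ne {ψ : ℝ} (hψ : ψ ∈ Ioo 0 (π / 2)) : tan ψ ≠ 0 :=
    (tan_pos_of_pos_of_lt_pi_div_two hψ.1 hψ.2).ne'
  simp only [hφ_eq, hθ_eq, mul_div_cancel_right₀ _ (htan_ne hφ),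
    mul_div_cancel_right₀ _ (htan_ne hθ)]

/-- For 0 < b < 2/π and each n ∈ ℕ, the equation ω = b tan(ωπ/2) has exactly one
solution in (2n, 2n+1). -/
theorem stmt_4 (b : ℝ) (hb0 : 0 < b) (hb : b < 2 / π) (n : ℕ) :
    ∃! ω : ℝ, ω ∈ Set.Ioo (2 * n : ℝ) (2 * n + 1) ∧ ω = b * Real.tan (ω * π / 2) := by
  have hπ : 0 < π / 2 := half_pos pi_pos
  have hbπ : b * π / 2 < 1 := by rw [lt_div_iff₀ pi_pos] at hb; linarith
  refine ((Equiv.mulRight₀ (π / 2) hπ.ne').trans (Equiv.subRight (n * π))).existsUnique_congr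
    (fun ω => ?_) |>.2 <|
    existsUnique_add_eq_mul_tan (c := n * π) (by positivity) hbπ (by positivity)
  have hθ : ω * (π / 2) - n * π = (ω - 2 * n) * (π / 2) := by ring
  have htan : tan (ω * (π / 2) - n * π) = tan (ω * π / 2) := by
    rw [tan_sub_nat_mul_pi, mul_div_assoc]
  simp only [Equiv.trans_apply, Equiv.mulRight₀_apply, Equiv.subRight_apply, sub_add_cancel, htan]
  refine and_congr ?_ ?_
  · rw [hθ, mem_Ioo, mem_Ioo, mul_pos_iff_of_pos_right hπ, mul_lt_iff_lt_one_left hπ, sub_pos,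
      sub_lt_iff_lt_add']
  · rw [show b * π / 2 * tan (ω * π / 2) = b * tan (ω * π / 2) * (π / 2) by ring]
    exact (mul_left_inj' hπ.ne').symm
end

section
/- For every b < 0 and every nonnegative integer n, the equation ω = b·tan(ωπ/2) has exactly one solution ω in the open interval (2n+1, 2n+2). -/
open Real Set Filter Topology

private lemma mem_shift {n : ℕ} {ω : ℝ} (hω : ω ∈ Set.Ioo (2 * n + 1 : ℝ) (2 * n + 2)) :
    ω * π / 2 - (n + 1) * π ∈ Set.Ioo (-(π / 2)) 0 := by
  obtain ⟨h1, h2⟩ := hω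
  have hπ := Real.pi_pos
  constructor <;> nlinarith

private lemma tan_shift {n : ℕ} (ω : ℝ) :
    Real.tan (ω * π / 2) = Real.tan (ω * π / 2 - (n + 1) * π) := by
  have := (Real.tan_periodic.sub_nat_mul_eq (x := ω * π / 2) (n + 1))
  push_cast at this
  exact this.symm

/-- For b < 0 and each n ∈ ℕ, the equation ω = b tan(ωπ/2) has exactly one
solution in (2n+1, 2n+2). -/
theorem stmt_5 (b : ℝ) (hb : b < 0) (n : ℕ) :
    ∃! ω : ℝ, ω ∈ Set.Ioo (2 * n + 1 : ℝ) (2 * n + 2) ∧ ω = b * Real.tan (ω * π / 2) := by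
  have hπ := Real.pi_pos
  set a : ℝ := 2 * n + 1 with ha
  set a2 : ℝ := 2 * n + 2 with ha2
  set f : ℝ → ℝ := fun ω => ω - b * Real.tan (ω * π / 2 - (n + 1) * π) with hf
  -- f agrees with ω - b tan(ωπ/2)
  have hfeq : ∀ ω : ℝ, f ω = ω - b * Real.tan (ω * π / 2) := by
    intro ω; rw [hf]; simp [← tan_shift (n := n) ω]
  -- continuity on Ioo
  have hcont : ContinuousOn f (Set.Ioo a a2) := by
    intro ω hω
    have ht := mem_shift hω
    have hc : Real.cos (ω * π / 2 - (n + 1) * π) ≠ 0 := by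
      have : Real.cos (ω * π / 2 - (n + 1) * π) > 0 :=
        Real.cos_pos_of_mem_Ioo ⟨ht.1, lt_trans ht.2 (by positivity)⟩
      linarith
    have haff : ContinuousAt (fun x : ℝ => x * π / 2 - (n + 1) * π) ω := by fun_prop
    have : ContinuousAt f ω := by
      apply ContinuousAt.sub continuousAt_id
      apply ContinuousAt.mul continuousAt_const
      show ContinuousAt (Real.tan ∘ fun x : ℝ => x * π / 2 - (n + 1) * π) ω
      exact ContinuousAt.comp (hf := haff) (Real.continuousAt_tan.mpr hc)
    exact this.continuousWithinAt
  -- strict monotonicity on Ioo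
  have hmono : StrictMonoOn f (Set.Ioo a a2) := by
    intro x hx y hy hxy
    have htx := mem_shift hx
    have hty := mem_shift hy
    have hmem : ∀ t ∈ Set.Ioo (-(π / 2)) (0 : ℝ), t ∈ Set.Ioo (-(π / 2)) (π / 2) := by
      intro t ht; exact ⟨ht.1, lt_trans ht.2 (by positivity)⟩
    have htan : Real.tan (x * π / 2 - (n + 1) * π) < Real.tan (y * π / 2 - (n + 1) * π) := by
      apply Real.strictMonoOn_tan (hmem _ htx) (hmem _ hty)
      nlinarith
    have : b * Real.tan (y * π / 2 - (n + 1) * π) < b * Real.tan (x * π / 2 - (n + 1) * π) :=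
      mul_lt_mul_of_neg_left htan hb
    simp only [hf]
    linarith
  -- negative value near a
  have hneg : ∃ x ∈ Set.Ioo a a2, f x < 0 := by
    have h1 : Tendsto (fun ω : ℝ => ω * π / 2 - (n + 1) * π) (𝓝[>] a) (𝓝[>] (-(π / 2))) := by
      apply tendsto_nhdsWithin_of_tendsto_nhds_of_eventually_within
      · have : Continuous (fun ω : ℝ => ω * π / 2 - (n + 1) * π) := by fun_prop
        have h0 : a * π / 2 - (n + 1) * π = -(π / 2) := by rw [ha]; push_cast; ring
        simpa [h0] using (this.tendsto a).mono_left nhdsWithin_le_nhds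
      · filter_upwards [self_mem_nhdsWithin] with ω hω
        have : (a : ℝ) < ω := hω
        simp only [Set.mem_Ioi]
        nlinarith
    have h2 : Tendsto (fun ω => Real.tan (ω * π / 2 - (n + 1) * π)) (𝓝[>] a) atBot :=
      Real.tendsto_tan_neg_pi_div_two.comp h1
    have h3 : Tendsto (fun ω => (-b) * Real.tan (ω * π / 2 - (n + 1) * π)) (𝓝[>] a) atBot :=
      Tendsto.const_mul_atBot (by linarith) h2
    have hid : Tendsto (fun ω : ℝ => ω) (𝓝[>] a) (𝓝 a) :=
      tendsto_id.mono_left nhdsWithin_le_nhds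
    have h4 : Tendsto f (𝓝[>] a) atBot := by
      have h4' := hid.add_atBot h3
      have heq : f = fun ω => ω + (-b) * Real.tan (ω * π / 2 - (n + 1) * π) := by
        funext ω; rw [hf]; ring
      rw [heq]; exact h4'
    have h5 : ∀ᶠ ω in 𝓝[>] a, f ω < 0 := h4.eventually (eventually_lt_atBot 0)
    have h6 : Set.Ioo a a2 ∈ 𝓝[>] a := by
      rw [← Set.Ioi_inter_Iio]
      exact inter_mem_nhdsWithin _ (Iio_mem_nhds (by rw [ha, ha2]; linarith))
    have h7 : {ω | f ω < 0} ∩ Set.Ioo a a2 ∈ 𝓝[>] a := inter_mem h5 h6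
    haveI : (𝓝[>] (a : ℝ)).NeBot := nhdsGT_neBot a
    obtain ⟨x, hx1, hx2⟩ := Filter.nonempty_of_mem h7
    exact ⟨x, hx2, hx1⟩
  -- positive value near a2
  have hpos : ∃ x ∈ Set.Ioo a a2, 0 < f x := by
    have h1 : Tendsto f (𝓝[<] a2) (𝓝 a2) := by
      have hc : ContinuousAt f a2 := by
        apply ContinuousAt.sub continuousAt_id
        apply ContinuousAt.mul continuousAt_const
        apply (Real.continuousAt_tan.mpr ?_).comp (by fun_prop)
        have h0 : a2 * π / 2 - (n + 1) * π = 0 := by rw [ha2]; push_cast; ring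
        rw [h0]; simp
      have h0 : f a2 = a2 := by
        have h0 : a2 * π / 2 - (n + 1) * π = 0 := by rw [ha2]; push_cast; ring
        simp [hf, h0]
      have h2 := (hc.continuousWithinAt (s := Set.Iio a2)).tendsto
      rwa [h0] at h2
    have h5 : ∀ᶠ ω in 𝓝[<] a2, 0 < f ω :=
      h1.eventually (eventually_gt_nhds (by rw [ha2]; positivity))
    have h6 : Set.Ioo a a2 ∈ 𝓝[<] a2 := by
      rw [← Set.Ioi_inter_Iio]
      exact inter_mem (mem_nhdsWithin_of_mem_nhds (Ioi_mem_nhds (by rw [ha, ha2]; linarith)))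
        self_mem_nhdsWithin
    have h7 : {ω | 0 < f ω} ∩ Set.Ioo a a2 ∈ 𝓝[<] a2 := inter_mem h5 h6
    haveI : (𝓝[<] (a2 : ℝ)).NeBot := nhdsLT_neBot a2
    obtain ⟨x, hx1, hx2⟩ := Filter.nonempty_of_mem h7
    exact ⟨x, hx2, hx1⟩
  obtain ⟨x1, hx1, hfx1⟩ := hneg
  obtain ⟨x2, hx2, hfx2⟩ := hpos
  have hsub : Set.Icc (f x1) (f x2) ⊆ f '' Set.Ioo a a2 :=
    isPreconnected_Ioo.intermediate_value hx1 hx2 hcont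
  obtain ⟨ω, hω, hfω⟩ := hsub ⟨le_of_lt hfx1, le_of_lt hfx2⟩
  refine ⟨ω, ⟨hω, ?_⟩, ?_⟩
  · have := hfeq ω
    rw [hfω] at this
    linarith
  · rintro y ⟨hy, hyeq⟩
    have hfy : f y = 0 := by rw [hfeq y]; linarith
    exact hmono.injOn hy hω (by rw [hfy, hfω])
end

section
/- For b > 2/π, the equation λ = b·tanh(λπ/2) has exactly one solution with λ > 0; for 0 < b ≤ 2/π there is no positive solution. -/
/-!
Substituting `x = λπ/2` turns the equation into `tanh x / x = 2 / (bπ)`. Since `tanh` is strictly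
concave on `[0, ∞)` and vanishes at `0`, the secant slope `tanh x / x` is strictly decreasing on
`(0, ∞)`; it tends to `tanh' 0 = 1` as `x → 0⁺` and is below `1 / x`. Hence it takes every value
in `(0, 1)` exactly once and never a value `≥ 1`, and `2 / (bπ) < 1` exactly when `b > 2/π`.
-/

open Real

open Filter Set Topology

namespace Real

lemma continuous_tanh : Continuous tanh := by
  simp only [funext tanh_eq_sinh_div_cosh]
  exact continuous_sinh.div continuous_cosh fun x => (cosh_pos x).ne'

lemma hasDerivAt_tanh (x : ℝ) : HasDerivAt tanh (1 / cosh x ^ 2) x := by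
  rw [funext tanh_eq_sinh_div_cosh]
  refine ((hasDerivAt_sinh x).div (hasDerivAt_cosh x) (cosh_pos x).ne').congr_deriv ?_
  rw [← cosh_sq_sub_sinh_sq x]
  ring

lemma strictConcaveOn_tanh : StrictConcaveOn ℝ (Ici 0) tanh := by
  refine StrictAntiOn.strictConcaveOn_of_deriv (convex_Ici 0) continuous_tanh.continuousOn ?_
  rw [interior_Ici, funext fun x => (hasDerivAt_tanh x).deriv]
  intro x (hx : 0 < x) y (hy : 0 < y) hxy
  have hcosh : cosh x < cosh y := cosh_strictMonoOn hx.le hy.le hxy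
  have hcosh_pos := cosh_pos x
  show 1 / cosh y ^ 2 < 1 / cosh x ^ 2
  gcongr

lemma strictAntiOn_tanh_div_self : StrictAntiOn (fun x => tanh x / x) (Ioi 0) := by
  intro x (hx : 0 < x) y (hy : 0 < y) hxy
  simpa [tanh_zero] using strictConcaveOn_tanh.secant_strict_mono self_mem_Ici
    hx.le hy.le hx.ne' hy.ne' hxy

lemma tendsto_tanh_div_self_nhdsGT : Tendsto (fun x => tanh x / x) (𝓝[>] 0) (𝓝 1) := by
  simpa [tanh_zero, div_eq_inv_mul] using (hasDerivAt_tanh 0).tendsto_slope_zero_right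

lemma tanh_div_self_lt_one {x : ℝ} (hx : 0 < x) : tanh x / x < 1 := by
  have hhalf : tanh (x / 2) / (x / 2) ≤ 1 := by
    refine ge_of_tendsto tendsto_tanh_div_self_nhdsGT ?_
    filter_upwards [Ioo_mem_nhdsGT (half_pos hx)] with w hw
    exact (strictAntiOn_tanh_div_self hw.1 (half_pos hx) hw.2).le
  exact (strictAntiOn_tanh_div_self (half_pos hx) hx (half_lt_self hx)).trans_le hhalf

lemma exists_tanh_div_self_eq {c : ℝ} (hc0 : 0 < c) (hc1 : c < 1) :
    ∃ x, 0 < x ∧ tanh x / x = c := by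
  obtain ⟨x₁, hx₁c, hx₁⟩ : ∃ x₁, c < tanh x₁ / x₁ ∧ 0 < x₁ :=
    ((tendsto_tanh_div_self_nhdsGT.eventually (eventually_gt_nhds hc1)).and
      self_mem_nhdsWithin).exists
  have hx₂c : tanh c⁻¹ / c⁻¹ < c := by
    rw [div_inv_eq_mul]
    exact mul_lt_of_lt_one_left hc0 (tanh_lt_one _)
  have hconn : IsPreconnected ((fun x => tanh x / x) '' Ioi 0) :=
    isPreconnected_Ioi.image _ <|
      continuous_tanh.continuousOn.div continuousOn_id fun x hx => ne_of_gt hx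
  obtain ⟨x, hx, hxc⟩ := hconn.Icc_subset (mem_image_of_mem _ (inv_pos.2 hc0 : c⁻¹ ∈ Ioi 0))
    (mem_image_of_mem _ (hx₁ : x₁ ∈ Ioi 0)) ⟨hx₂c.le, hx₁c.le⟩
  exact ⟨x, hx, hxc⟩

end Real

lemma eq_mul_tanh_mul_pi_div_two_iff {b l : ℝ} (hb : b ≠ 0) (hl : l ≠ 0) :
    l = b * tanh (l * π / 2) ↔ tanh (l * π / 2) / (l * π / 2) = 2 / (b * π) := by
  rw [div_eq_div_iff (by positivity) (by positivity), show 2 * (l * π / 2) = l * π by ring,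
    ← mul_assoc, mul_left_inj' pi_ne_zero, mul_comm, eq_comm]

/-- For b > 2/π, λ = b tanh(λπ/2) has exactly one positive solution;
for 0 < b ≤ 2/π there is no positive solution. -/
theorem stmt_6 (b : ℝ) :
    (2 / π < b → ∃! l : ℝ, 0 < l ∧ l = b * Real.tanh (l * π / 2)) ∧
    (0 < b → b ≤ 2 / π → ¬∃ l : ℝ, 0 < l ∧ l = b * Real.tanh (l * π / 2)) := by
  refine ⟨fun hb => ?_, fun hb0 hb ⟨l, hl, hlb⟩ => ?_⟩
  · have hb0 : 0 < b := (by positivity : 0 < 2 / π).trans hb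
    have hc1 : 2 / (b * π) < 1 := by
      rwa [div_lt_one (by positivity), ← div_lt_iff₀ pi_pos]
    obtain ⟨x, hx, hxc⟩ := exists_tanh_div_self_eq (by positivity) hc1
    refine ⟨2 * x / π, ⟨by positivity, ?_⟩, fun l ⟨hl, hlb⟩ => ?_⟩
    · rw [eq_mul_tanh_mul_pi_div_two_iff hb0.ne' (by positivity),
        show 2 * x / π * π / 2 = x by field_simp, hxc]
    · have hlx : l * π / 2 = x := strictAntiOn_tanh_div_self.injOn
        (show 0 < l * π / 2 by positivity) hx
        (((eq_mul_tanh_mul_pi_div_two_iff hb0.ne' hl.ne').1 hlb).trans hxc.symm)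
      rw [← hlx]
      field_simp
  · have hc1 : 1 ≤ 2 / (b * π) := by
      rwa [one_le_div (by positivity), ← le_div_iff₀ pi_pos]
    rw [eq_mul_tanh_mul_pi_div_two_iff hb0.ne' hl.ne'] at hlb
    exact (tanh_div_self_lt_one (by positivity)).not_ge (hlb ▸ hc1)
end

section
/- The function f₁(x) = x/sin(x) on (0, π/2] satisfies the linearized static equation f₁'' + 2·cot(x)·f₁' − f₁ = 0, and satisfies the Robin condition f₁'(π/2) = b·f₁(π/2) exactly when b = 2/π. -/
/-!
Writing `f₁ = u / sin` one has `sin · (f₁'' + 2 cot · f₁' - f₁) = u''`, so for `u = x` the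
linearized equation reduces to `x'' = 0`. At `π / 2`, where `sin = 1` and `cos = 0`, we get
`f₁ = π / 2` and `f₁' = 1`, whence the Robin constant `2 / π`.
-/

open Real Topology

lemma hasDerivAt_id_div_sin {x : ℝ} (hx : sin x ≠ 0) :
    HasDerivAt (fun y => y / sin y) ((sin x - x * cos x) / sin x ^ 2) x := by
  simpa using (hasDerivAt_id' x).fun_div (hasDerivAt_sin x) hx

lemma deriv_id_div_sin_eventuallyEq {x : ℝ} (hx : sin x ≠ 0) :
    deriv (fun y => y / sin y) =ᶠ[𝓝 x] fun y => (sin y - y * cos y) / sin y ^ 2 :=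
  (continuous_sin.continuousAt.eventually_ne hx).mono fun _ hy => (hasDerivAt_id_div_sin hy).deriv

lemma hasDerivAt_deriv_id_div_sin {x : ℝ} (hx : sin x ≠ 0) :
    HasDerivAt (deriv fun y => y / sin y)
      ((x * sin x ^ 2 - 2 * sin x * cos x + 2 * x * cos x ^ 2) / sin x ^ 3) x := by
  refine HasDerivAt.congr_of_eventuallyEq ?_ (deriv_id_div_sin_eventuallyEq hx)
  have h := ((hasDerivAt_sin x).fun_sub ((hasDerivAt_id' x).fun_mul (hasDerivAt_cos x))).fun_div
    ((hasDerivAt_sin x).fun_pow 2) (pow_ne_zero 2 hx)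
  refine h.congr_deriv ?_
  field_simp
  ring

theorem id_div_sin_linearized_eq_zero {x : ℝ} (hx : sin x ≠ 0) :
    deriv (deriv fun y => y / sin y) x + 2 * (cos x / sin x) * deriv (fun y => y / sin y) x
      - x / sin x = 0 := by
  rw [(hasDerivAt_deriv_id_div_sin hx).deriv, (hasDerivAt_id_div_sin hx).deriv]
  field_simp
  ring

lemma deriv_id_div_sin_pi_div_two : deriv (fun y => y / sin y) (π / 2) = 1 := by
  simp [(hasDerivAt_id_div_sin (x := π / 2) (by simp)).deriv]

/-- f₁(x) = x/sin x satisfies f₁'' + 2 cot x f₁' - f₁ = 0 on (0, π/2], and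
the Robin condition f₁'(π/2) = b f₁(π/2) holds exactly when b = 2/π. -/
theorem stmt_7 (f₁ : ℝ → ℝ) (hf : ∀ x, f₁ x = x / Real.sin x) :
    (∀ x ∈ Set.Ioc 0 (π / 2),
      deriv (deriv f₁) x + 2 * (Real.cos x / Real.sin x) * deriv f₁ x - f₁ x = 0) ∧
    (∀ b : ℝ, deriv f₁ (π / 2) = b * f₁ (π / 2) ↔ b = 2 / π) := by
  obtain rfl : f₁ = fun x => x / sin x := funext hf
  refine ⟨fun x hx => id_div_sin_linearized_eq_zero ?_, fun b => ?_⟩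
  · exact (sin_pos_of_pos_of_lt_pi hx.1 (by linarith [hx.2, pi_pos])).ne'
  · rw [deriv_id_div_sin_pi_div_two]
    dsimp only
    rw [sin_pi_div_two, div_one, eq_div_iff pi_ne_zero]
    constructor <;> intro h <;> linarith
end

section
/- Suppose (φ, A) is a C² solution on an interval of the static system (1+r²)A φ'' + (r(1+r²)A φ'² + (1+r²)A' + ((2+4r²)/r)A)φ' + 2φ = 0 and (1+r²)A' − ((1+3r²)/r)(1−A) − 2rφ² + r(1+r²)A φ'² = 0 with r > 0. Define B(r) = (A(r)−1)(1+r²). If B'(r₀) = 0 at some r₀ > 0, then B''(r₀) = 2φ'(r₀)² + 4r₀²φ(r₀)²φ'(r₀)² + 4(r₀φ'(r₀)+φ(r₀))², and in particular B''(r₀) ≥ 0. -/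
open Filter Topology

/-!
Differentiating `B = (A - 1)(1 + r²)` twice expresses `B''` through `A''`, `A'` and `A`.
Differentiating the constraint equation for `A` eliminates `A''` in favour of `φ''`, which the
Klein–Gordon equation expresses through lower-order terms; the constraint itself eliminates `A'`,
and at a critical point of `B` the relation `A'(1 + r²) = 2r(1 - A)` eliminates `A`. What is
left is the stated sum of squares.
-/

section Calculus

variable {𝕜 : Type*} [NontriviallyNormedField 𝕜] {F : Type*} [NormedAddCommGroup F]
  [NormedSpace 𝕜 F] {f : 𝕜 → F} {s : Set 𝕜} {x : 𝕜}

theorem ContDiffOn.eventually_hasDerivAt_of_isOpen {n : WithTop ℕ∞} (hf : ContDiffOn 𝕜 n f s)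
    (hn : n ≠ 0) (hs : IsOpen s) (hx : x ∈ s) : ∀ᶠ y in 𝓝 x, HasDerivAt f (deriv f y) y :=
  eventually_of_mem (hs.mem_nhds hx) fun _ hy =>
    ((hf.differentiableOn hn).differentiableAt (hs.mem_nhds hy)).hasDerivAt

theorem ContDiffOn.hasDerivAt_deriv_of_isOpen (hf : ContDiffOn 𝕜 2 f s) (hs : IsOpen s)
    (hx : x ∈ s) : HasDerivAt (deriv f) (deriv (deriv f) x) x :=
  ((hf.deriv_of_isOpen hs (by norm_num : (1 : WithTop ℕ∞) + 1 ≤ 2)).eventually_hasDerivAt_of_isOpen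
    one_ne_zero hs hx).self_of_nhds

end Calculus

section StaticSystem

variable {A : ℝ → ℝ} {r : ℝ}

theorem hasDerivAt_sub_one_mul_one_add_sq {a' : ℝ} (hA : HasDerivAt A a' r) :
    HasDerivAt (fun x => (A x - 1) * (1 + x ^ 2)) (a' * (1 + r ^ 2) + 2 * r * (A r - 1)) r := by
  refine ((hA.sub_const 1).fun_mul ((hasDerivAt_pow 2 r).const_add 1)).congr_deriv ?_
  push_cast
  ring

theorem hasDerivAt_deriv_sub_one_mul_one_add_sq {a'' : ℝ}
    (hA : ∀ᶠ x in 𝓝 r, HasDerivAt A (deriv A x) x) (hA' : HasDerivAt (deriv A) a'' r) :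
    HasDerivAt (deriv fun x => (A x - 1) * (1 + x ^ 2))
      (a'' * (1 + r ^ 2) + 4 * r * deriv A r + 2 * (A r - 1)) r := by
  have hB' : (deriv fun x => (A x - 1) * (1 + x ^ 2)) =ᶠ[𝓝 r]
      fun x => deriv A x * (1 + x ^ 2) + 2 * x * (A x - 1) :=
    hA.mono fun x hx => (hasDerivAt_sub_one_mul_one_add_sq hx).deriv
  have h := (hA'.fun_mul ((hasDerivAt_pow 2 r).const_add 1)).add
    (((hasDerivAt_id' r).const_mul 2).fun_mul (hA.self_of_nhds.sub_const 1))
  refine (h.congr_deriv ?_).congr_of_eventuallyEq hB'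
  ring

-- `ψ` and `α` stand for `φ'` and `A'`.
theorem hasDerivAt_constraint {φ ψ α : ℝ → ℝ} {p' q' a' b' : ℝ} (hr : r ≠ 0)
    (hφ : HasDerivAt φ p' r) (hψ : HasDerivAt ψ q' r) (hA : HasDerivAt A a' r)
    (hα : HasDerivAt α b' r) :
    HasDerivAt (fun x => (1 + x ^ 2) * α x - ((1 + 3 * x ^ 2) / x) * (1 - A x)
        - 2 * x * φ x ^ 2 + x * (1 + x ^ 2) * A x * ψ x ^ 2)
      (2 * r * α r + (1 + r ^ 2) * b' - ((3 - 1 / r ^ 2) * (1 - A r)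
          - ((1 + 3 * r ^ 2) / r) * a') - (2 * φ r ^ 2 + 4 * r * φ r * p')
        + ((1 + 3 * r ^ 2) * A r * ψ r ^ 2 + r * (1 + r ^ 2) * a' * ψ r ^ 2
          + 2 * r * (1 + r ^ 2) * A r * ψ r * q')) r := by
  have hsq := (hasDerivAt_pow 2 r).const_add 1
  have hquot := (((hasDerivAt_pow 2 r).const_mul 3).const_add 1).fun_div (hasDerivAt_id' r) hr
  have hcube := (hasDerivAt_id' r).fun_mul hsq
  have h := (((hsq.fun_mul hα).fun_sub (hquot.fun_mul (hA.const_sub 1))).fun_sub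
    (((hasDerivAt_id' r).const_mul 2).fun_mul (hφ.fun_pow 2))).fun_add
    ((hcube.fun_mul hA).fun_mul (hψ.fun_pow 2))
  refine h.congr_deriv ?_
  push_cast
  field_simp
  ring

theorem deriv_deriv_identity_of_static {p p' p'' a a' a'' : ℝ} (hr : r ≠ 0)
    (hKG : (1 + r ^ 2) * a * p'' + (r * (1 + r ^ 2) * a * p' ^ 2 + (1 + r ^ 2) * a'
      + ((2 + 4 * r ^ 2) / r) * a) * p' + 2 * p = 0)
    (hC : (1 + r ^ 2) * a' - ((1 + 3 * r ^ 2) / r) * (1 - a) - 2 * r * p ^ 2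
      + r * (1 + r ^ 2) * a * p' ^ 2 = 0)
    (hC' : 2 * r * a' + (1 + r ^ 2) * a'' - ((3 - 1 / r ^ 2) * (1 - a)
          - ((1 + 3 * r ^ 2) / r) * a') - (2 * p ^ 2 + 4 * r * p * p')
        + ((1 + 3 * r ^ 2) * a * p' ^ 2 + r * (1 + r ^ 2) * a' * p' ^ 2
          + 2 * r * (1 + r ^ 2) * a * p' * p'') = 0)
    (hcrit : a' * (1 + r ^ 2) + 2 * r * (a - 1) = 0) :
    a'' * (1 + r ^ 2) + 4 * r * a' + 2 * (a - 1) =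
      2 * p' ^ 2 + 4 * r ^ 2 * p ^ 2 * p' ^ 2 + 4 * (r * p' + p) ^ 2 := by
  field_simp at hKG hC hC'
  have key : r ^ 2 * (a'' * (1 + r ^ 2) + 4 * r * a' + 2 * (a - 1) -
      (2 * p' ^ 2 + 4 * r ^ 2 * p ^ 2 * p' ^ 2 + 4 * (r * p' + p) ^ 2)) = 0 := by
    linear_combination (1 + 2 * r ^ 2 * p' ^ 2) * hC - 2 * r ^ 2 * p' * hKG + hC'
      - (2 * r + r ^ 3 * p' ^ 2) * hcrit
  exact sub_eq_zero.mp ((mul_eq_zero.mp key).resolve_left (pow_ne_zero 2 hr))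

end StaticSystem

theorem stmt_9_general (a c : ℝ) (φ A : ℝ → ℝ)
    (hφ : ContDiffOn ℝ 2 φ (Set.Ioo a c)) (hA : ContDiffOn ℝ 2 A (Set.Ioo a c))
    (heqφ : ∀ r ∈ Set.Ioo a c,
      (1 + r ^ 2) * A r * deriv (deriv φ) r
        + (r * (1 + r ^ 2) * A r * (deriv φ r) ^ 2 + (1 + r ^ 2) * deriv A r
            + ((2 + 4 * r ^ 2) / r) * A r) * deriv φ r + 2 * φ r = 0)
    (heqA : ∀ r ∈ Set.Ioo a c,
      (1 + r ^ 2) * deriv A r - ((1 + 3 * r ^ 2) / r) * (1 - A r)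
        - 2 * r * (φ r) ^ 2 + r * (1 + r ^ 2) * A r * (deriv φ r) ^ 2 = 0)
    (B : ℝ → ℝ) (hB : ∀ r, B r = (A r - 1) * (1 + r ^ 2))
    (r₀ : ℝ) (hr₀ : r₀ ∈ Set.Ioo a c) (hr₀pos : 0 < r₀)
    (hcrit : deriv B r₀ = 0) :
    deriv (deriv B) r₀ =
        2 * (deriv φ r₀) ^ 2 + 4 * r₀ ^ 2 * (φ r₀) ^ 2 * (deriv φ r₀) ^ 2
          + 4 * (r₀ * deriv φ r₀ + φ r₀) ^ 2 ∧
      0 ≤ deriv (deriv B) r₀ := by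
  obtain rfl : B = fun x => (A x - 1) * (1 + x ^ 2) := funext hB
  have hA₁ := hA.eventually_hasDerivAt_of_isOpen two_ne_zero isOpen_Ioo hr₀
  have hA₂ := hA.hasDerivAt_deriv_of_isOpen isOpen_Ioo hr₀
  have hφ₁ := (hφ.eventually_hasDerivAt_of_isOpen two_ne_zero isOpen_Ioo hr₀).self_of_nhds
  have hφ₂ := hφ.hasDerivAt_deriv_of_isOpen isOpen_Ioo hr₀
  have hC' := (hasDerivAt_constraint hr₀pos.ne' hφ₁ hφ₂ hA₁.self_of_nhds hA₂).unique
    ((hasDerivAt_const r₀ 0).congr_of_eventuallyEq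
      (eventually_of_mem (isOpen_Ioo.mem_nhds hr₀) heqA))
  rw [(hasDerivAt_sub_one_mul_one_add_sq hA₁.self_of_nhds).deriv] at hcrit
  rw [(hasDerivAt_deriv_sub_one_mul_one_add_sq hA₁ hA₂).deriv,
    deriv_deriv_identity_of_static hr₀pos.ne' (heqφ r₀ hr₀) (heqA r₀ hr₀) hC' hcrit]
  exact ⟨rfl, by positivity⟩

/-- If (φ, A) is a C² solution of the static system on an interval of positive radii,
and B(r) = (A(r)−1)(1+r²) has B'(r₀) = 0 at some r₀ in the interval, then
B''(r₀) = 2φ'² + 4r²φ²φ'² + 4(rφ'+φ)² at r₀, which is nonnegative. -/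
theorem stmt_9 (a c : ℝ) (φ A : ℝ → ℝ)
    (ha : 0 ≤ a)
    (hφ : ContDiffOn ℝ 2 φ (Set.Ioo a c)) (hA : ContDiffOn ℝ 2 A (Set.Ioo a c))
    (heqφ : ∀ r ∈ Set.Ioo a c,
      (1 + r ^ 2) * A r * deriv (deriv φ) r
        + (r * (1 + r ^ 2) * A r * (deriv φ r) ^ 2 + (1 + r ^ 2) * deriv A r
            + ((2 + 4 * r ^ 2) / r) * A r) * deriv φ r + 2 * φ r = 0)
    (heqA : ∀ r ∈ Set.Ioo a c,
      (1 + r ^ 2) * deriv A r - ((1 + 3 * r ^ 2) / r) * (1 - A r)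
        - 2 * r * (φ r) ^ 2 + r * (1 + r ^ 2) * A r * (deriv φ r) ^ 2 = 0)
    (B : ℝ → ℝ) (hB : ∀ r, B r = (A r - 1) * (1 + r ^ 2))
    (r₀ : ℝ) (hr₀ : r₀ ∈ Set.Ioo a c) (hr₀pos : 0 < r₀)
    (hcrit : deriv B r₀ = 0) :
    deriv (deriv B) r₀ =
        2 * (deriv φ r₀) ^ 2 + 4 * r₀ ^ 2 * (φ r₀) ^ 2 * (deriv φ r₀) ^ 2
          + 4 * (r₀ * deriv φ r₀ + φ r₀) ^ 2 ∧
      0 ≤ deriv (deriv B) r₀ :=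
  stmt_9_general a c φ A hφ hA heqφ heqA B hB r₀ hr₀ hr₀pos hcrit
end

section
/- For each nonnegative integer n, let ω_n(b) denote the unique solution in (2n, 2n+2) of ω = b·tan(ωπ/2) for b near 0 (b ≠ 0 small). Then as n → ∞ with b fixed, ω_n = 2n + 1 − b/(πn) + O(1/n²). -/
/-!
Writing `ω = 2n + 1 + δ`, periodicity of `tan` and `tan (π/2 - x) = (tan x)⁻¹` turn the equation
into `tan (-δπ/2) = b/ω` with `|δπ/2| < π/2`, so exactly `δ = -(2/π) arctan (b/ω)`.
Since `arctan x = x + O(x³)` and `2/ω = 1/n + O(1/n²)` on `(2n, 2n+2)`,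
this gives `δ = -b/(πn) + O(1/n²)`.
-/

open Real Filter Asymptotics

theorem abs_arctan_sub_self_le (x : ℝ) : |arctan x - x| ≤ |x| ^ 3 := by
  have hderiv : ∀ t ∈ Metric.closedBall (0 : ℝ) |x|,
      HasDerivWithinAt (fun t => arctan t - t) (1 / (1 + t ^ 2) - 1)
        (Metric.closedBall 0 |x|) t :=
    fun t _ => ((hasDerivAt_arctan t).sub (hasDerivAt_id t)).hasDerivWithinAt
  have hbound : ∀ t ∈ Metric.closedBall (0 : ℝ) |x|, ‖1 / (1 + t ^ 2) - 1‖ ≤ x ^ 2 := by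
    intro t ht
    rw [mem_closedBall_zero_iff, norm_eq_abs] at ht
    have hsq : t ^ 2 ≤ x ^ 2 := sq_le_sq.mpr ht
    rw [norm_eq_abs, show 1 / (1 + t ^ 2) - 1 = -(t ^ 2 / (1 + t ^ 2)) by field_simp; ring,
      abs_neg, abs_of_nonneg (by positivity), div_le_iff₀ (by positivity)]
    nlinarith [sq_nonneg t]
  have hmvt := (convex_closedBall (0 : ℝ) |x|).norm_image_sub_le_of_norm_hasDerivWithin_le
    hderiv hbound (Metric.mem_closedBall_self (abs_nonneg x))
    (show x ∈ Metric.closedBall 0 |x| by simp)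
  simpa [arctan_zero, pow_succ, sq_abs] using hmvt

theorem arctan_div_eq_of_eq_mul_tan {b w : ℝ} {n : ℕ} (hw : w ∈ Set.Ioo (2 * n : ℝ) (2 * n + 2))
    (h : w = b * tan (w * π / 2)) : arctan (b / w) = (2 * n + 1 - w) * π / 2 := by
  obtain ⟨hw₁, hw₂⟩ := hw
  have hw0 : w ≠ 0 := (lt_of_le_of_lt (by positivity) hw₁).ne'
  have hx : (2 * n + 1 - w) * π / 2 ∈ Set.Ioo (-(π / 2)) (π / 2) :=
    ⟨by nlinarith [pi_pos], by nlinarith [pi_pos]⟩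
  have htan : tan (w * π / 2) = (tan ((2 * n + 1 - w) * π / 2))⁻¹ := by
    rw [show w * π / 2 = π / 2 - (2 * n + 1 - w) * π / 2 + n * π by ring,
      tan_add_nat_mul_pi, tan_pi_div_two_sub]
  rw [htan] at h
  generalize (2 * n + 1 - w) * π / 2 = x at h hx ⊢
  have htan0 : tan x ≠ 0 := by
    rintro h0
    exact hw0 (by simpa [h0] using h)
  refine arctan_eq_of_tan_eq ?_ hx
  rw [eq_div_iff hw0, h]
  field_simp

theorem abs_one_div_sub_two_div_le {x w : ℝ} (hx : 0 < x) (hw₁ : 2 * x ≤ w)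
    (hw₂ : w ≤ 2 * x + 2) : |1 / x - 2 / w| ≤ 1 / x ^ 2 := by
  have hw : 0 < w := by linarith
  rw [show 1 / x - 2 / w = (w - 2 * x) / (x * w) by field_simp,
    abs_of_nonneg (by positivity), div_le_div_iff₀ (by positivity) (by positivity)]
  nlinarith

theorem isBigO_const_div_of_two_mul_lt (b : ℝ) {w : ℕ → ℝ} (hw : ∀ n : ℕ, 2 * n < w n) :
    (fun n : ℕ => b / w n) =O[atTop] (fun n : ℕ => 1 / (n : ℝ)) := by
  refine IsBigO.of_bound (|b| / 2) ?_
  filter_upwards [eventually_ge_atTop 1] with n hn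
  have hn' : (0 : ℝ) < n := by exact_mod_cast hn
  rw [norm_eq_abs, norm_eq_abs, abs_div, abs_of_pos (show 0 < w n by linarith [hw n]),
    abs_of_pos (show (0 : ℝ) < 1 / n by positivity)]
  calc |b| / w n ≤ |b| / (2 * n) :=
        div_le_div_of_nonneg_left (abs_nonneg b) (by positivity) (hw n).le
    _ = |b| / 2 * (1 / n) := by ring

theorem isBigO_one_div_natCast_pow_three :
    (fun n : ℕ => (1 / (n : ℝ)) ^ 3) =O[atTop] (fun n : ℕ => 1 / (n : ℝ) ^ 2) := by
  have := (isBigO_refl (fun n : ℕ => 1 / (n : ℝ) ^ 2) atTop).mul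
    (tendsto_one_div_atTop_nhds_zero_nat.isBigO_one ℝ)
  simpa [pow_succ, div_pow] using this

theorem stmt_16_general (b : ℝ) (ω : ℕ → ℝ)
    (hmem : ∀ n : ℕ, ω n ∈ Set.Ioo (2 * n : ℝ) (2 * n + 2))
    (heq : ∀ n : ℕ, ω n = b * Real.tan (ω n * π / 2)) :
    (fun n : ℕ => ω n - (2 * n + 1 - b / (π * n))) =O[Filter.atTop]
      (fun n : ℕ => 1 / (n : ℝ) ^ 2) := by
  have harctan : (fun n => arctan (b / ω n) - b / ω n) =O[atTop] fun n : ℕ => 1 / (n : ℝ) ^ 2 :=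
    ((IsBigO.of_bound 1 (Eventually.of_forall fun n => by
      simpa only [norm_eq_abs, norm_pow, one_mul] using abs_arctan_sub_self_le (b / ω n))).trans
      ((isBigO_const_div_of_two_mul_lt b fun n => (hmem n).1).pow 3)).trans
      isBigO_one_div_natCast_pow_three
  have hinv : (fun n : ℕ => 1 / (n : ℝ) - 2 / ω n) =O[atTop] fun n : ℕ => 1 / (n : ℝ) ^ 2 := by
    refine IsBigO.of_bound 1 ?_
    filter_upwards [eventually_gt_atTop 0] with n hn
    rw [one_mul, norm_eq_abs, norm_of_nonneg (by positivity)]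
    exact abs_one_div_sub_two_div_le (by exact_mod_cast hn) (hmem n).1.le (hmem n).2.le
  refine ((harctan.const_mul_left (-(2 / π))).add
    (hinv.const_mul_left (b / π))).congr_left fun n => ?_
  rw [arctan_div_eq_of_eq_mul_tan (hmem n) (heq n)]
  field_simp
  ring

/-- If ω_n is the solution of ω = b tan(ωπ/2) in (2n, 2n+2) (b ≠ 0 fixed), then as
n → ∞, ω_n = 2n + 1 − b/(πn) + O(1/n²). -/
theorem stmt_16 (b : ℝ) (hb : b ≠ 0) (ω : ℕ → ℝ)
    (hmem : ∀ n : ℕ, ω n ∈ Set.Ioo (2 * n : ℝ) (2 * n + 2))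
    (heq : ∀ n : ℕ, ω n = b * Real.tan (ω n * π / 2)) :
    (fun n : ℕ => ω n - (2 * n + 1 - b / (π * n))) =O[Filter.atTop]
      (fun n : ℕ => 1 / (n : ℝ) ^ 2) :=
  stmt_16_general b ω hmem heq
end

section
/- Let λ(b) be defined for b > 2/π as the unique positive solution of λ = b·tanh(λπ/2). Then λ(b) → 0 as b → (2/π)+, and λ(b)²/(b − 2/π) → 6/π as b → (2/π)+. -/
open Real

lemma tanh_hasDeriv (x : ℝ) : HasDerivAt Real.tanh (1 - Real.tanh x ^ 2) x := by
  have h := (Real.hasDerivAt_sinh x).div (Real.hasDerivAt_cosh x) (Real.cosh_pos x).ne'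
  have hfun : Real.tanh = fun y => Real.sinh y / Real.cosh y := by
    funext y; exact Real.tanh_eq_sinh_div_cosh y
  have hc := (Real.cosh_pos x).ne'
  have hsq := Real.cosh_sq_sub_sinh_sq x
  have hval : (1 : ℝ) - Real.tanh x ^ 2 = (Real.cosh x * Real.cosh x - Real.sinh x * Real.sinh x) / Real.cosh x ^ 2 := by
    rw [Real.tanh_eq_sinh_div_cosh]
    field_simp
  rw [hval, hfun]
  exact h

lemma continuous_tanh' : Continuous Real.tanh :=
  continuous_iff_continuousAt.2 fun x => (tanh_hasDeriv x).continuousAt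

lemma tanh_lt_one' (x : ℝ) : Real.tanh x < 1 := by
  rw [Real.tanh_eq_sinh_div_cosh, div_lt_one (Real.cosh_pos x)]
  exact Real.sinh_lt_cosh x

lemma tanh_pos' {x : ℝ} (h : 0 < x) : 0 < Real.tanh x := by
  rw [Real.tanh_eq_sinh_div_cosh]
  exact div_pos (Real.sinh_pos_iff.2 h) (Real.cosh_pos x)

lemma tanh_lt_self {x : ℝ} (h : 0 < x) : Real.tanh x < x := by
  have hmono : StrictMonoOn (fun y => y - Real.tanh y) (Set.Ici 0) := by
    apply strictMonoOn_of_deriv_pos (convex_Ici 0)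
    · exact (continuous_id.sub continuous_tanh').continuousOn
    · intro y hy
      rw [interior_Ici] at hy
      have hd : HasDerivAt (fun y => y - Real.tanh y) (1 - (1 - Real.tanh y ^ 2)) y :=
        (hasDerivAt_id y).sub (tanh_hasDeriv y)
      rw [hd.deriv]
      have := tanh_pos' hy
      nlinarith
  have := hmono (Set.self_mem_Ici) (Set.mem_Ici.2 h.le) h
  simp only [Real.tanh_zero, sub_zero] at this
  linarith

lemma lt_tanh {x : ℝ} (h : 0 < x) : x - x ^ 3 / 3 < Real.tanh x := by
  have hmono : StrictMonoOn (fun y => Real.tanh y - y + y ^ 3 / 3) (Set.Ici 0) := by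
    apply strictMonoOn_of_deriv_pos (convex_Ici 0)
    · exact ((continuous_tanh'.sub continuous_id).add (by continuity)).continuousOn
    · intro y hy
      rw [interior_Ici] at hy
      have hd : HasDerivAt (fun y => Real.tanh y - y + y ^ 3 / 3) ((1 - Real.tanh y ^ 2) - 1 + (3 : ℕ) * y ^ 2 / 3) y :=
        ((tanh_hasDeriv y).sub (hasDerivAt_id y)).add ((hasDerivAt_pow 3 y).div_const 3)
      rw [hd.deriv]
      have h1 := tanh_pos' hy
      have h2 := tanh_lt_self hy
      push_cast
      nlinarith
  have := hmono (Set.self_mem_Ici) (Set.mem_Ici.2 h.le) h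
  simp only [Real.tanh_zero] at this
  nlinarith [this]

lemma tanh_lt' {x : ℝ} (h0 : 0 < x) (h1 : x ≤ 1.6) :
    Real.tanh x < x - x ^ 3 / 3 + 2 * x ^ 5 / 15 := by
  have hmono : StrictMonoOn (fun y => y - y ^ 3 / 3 + 2 * y ^ 5 / 15 - Real.tanh y) (Set.Icc 0 1.6) := by
    apply strictMonoOn_of_deriv_pos (convex_Icc 0 1.6)
    · exact ((continuous_id.sub (by continuity)).add (by continuity) |>.sub continuous_tanh').continuousOn
    · intro y hy
      rw [interior_Icc] at hy
      obtain ⟨hy0, hy1⟩ := hy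
      have hd : HasDerivAt (fun y => y - y ^ 3 / 3 + 2 * y ^ 5 / 15 - Real.tanh y)
          ((1 - (3 : ℕ) * y ^ 2 / 3 + 2 * ((5 : ℕ) * y ^ 4) / 15) - (1 - Real.tanh y ^ 2)) y := by
        exact (((hasDerivAt_id y).sub ((hasDerivAt_pow 3 y).div_const 3)).add
          (((hasDerivAt_pow 5 y).const_mul 2).div_const 15)).sub (tanh_hasDeriv y)
      rw [hd.deriv]
      have h1 := lt_tanh hy0
      have hsq : y ^ 2 < 2.56 := by nlinarith
      have h2 : 0 ≤ y - y ^ 3 / 3 := by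
        nlinarith [mul_nonneg hy0.le (show (0:ℝ) ≤ 3 - y ^ 2 by nlinarith)]
      have h3 : Real.tanh y ^ 2 > y ^ 2 - 2 * y ^ 4 / 3 + y ^ 6 / 9 := by nlinarith
      push_cast
      nlinarith [pow_pos hy0 6]
  have := hmono (Set.left_mem_Icc.2 (by norm_num)) (Set.mem_Icc.2 ⟨h0.le, h1⟩) h0
  simp only [Real.tanh_zero] at this
  nlinarith [this]

lemma key {b x : ℝ} (hb1 : 2 / π < b) (hb2 : b < 1) (hx : 0 < x)
    (heq : x = b * Real.tanh (x * π / 2)) :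
    x < b ∧ 12 * (b * π - 2) < x ^ 2 * (b * π ^ 3) ∧
      x ^ 2 * (b * π ^ 3) * (1 - π ^ 2 * x ^ 2 / 10) < 12 * (b * π - 2) := by
  have hπ : 0 < π := Real.pi_pos
  have hπ32 : π < 3.2 := by linarith [Real.pi_lt_d2]
  have hb0 : 0 < b := lt_trans (by positivity) hb1
  have ht : 0 < x * π / 2 := by positivity
  have hxb : x < b := by
    calc x = b * Real.tanh (x * π / 2) := heq
    _ < b * 1 := by exact (mul_lt_mul_iff_right₀ hb0).2 (tanh_lt_one' _)
    _ = b := mul_one b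
  have ht16 : x * π / 2 ≤ 1.6 := by nlinarith
  have hlo := lt_tanh ht
  have hhi := tanh_lt' ht ht16
  have H1 : b * (x * π / 2 - (x * π / 2) ^ 3 / 3) < x := by
    have h := (mul_lt_mul_iff_right₀ hb0).2 hlo; rwa [← heq] at h
  have H2 : x < b * (x * π / 2 - (x * π / 2) ^ 3 / 3 + 2 * (x * π / 2) ^ 5 / 15) := by
    have h := (mul_lt_mul_iff_right₀ hb0).2 hhi; rwa [← heq] at h
  have D1 : b * π / 2 - b * x ^ 2 * π ^ 3 / 24 < 1 := by
    have : x * (b * π / 2 - b * x ^ 2 * π ^ 3 / 24) < x * 1 := by nlinarith [H1]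
    exact lt_of_mul_lt_mul_left this hx.le
  have D2 : 1 < b * π / 2 - b * x ^ 2 * π ^ 3 / 24 + b * x ^ 4 * π ^ 5 / 240 := by
    have : x * 1 < x * (b * π / 2 - b * x ^ 2 * π ^ 3 / 24 + b * x ^ 4 * π ^ 5 / 240) := by
      nlinarith [H2]
    exact lt_of_mul_lt_mul_left this hx.le
  refine ⟨hxb, by nlinarith [D1], by nlinarith [D2]⟩

set_option maxHeartbeats 1000000 in
/-- If for b > 2/π, l(b) is the (unique) positive solution of λ = b tanh(λπ/2), then
l(b) → 0 as b → (2/π)⁺ and l(b)²/(b − 2/π) → 6/π as b → (2/π)⁺. -/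
theorem stmt_17 (l : ℝ → ℝ)
    (hl : ∀ b : ℝ, 2 / π < b → 0 < l b ∧ l b = b * Real.tanh (l b * π / 2)) :
    Filter.Tendsto l (nhdsWithin (2 / π) (Set.Ioi (2 / π))) (nhds 0) ∧
    Filter.Tendsto (fun b => (l b) ^ 2 / (b - 2 / π))
      (nhdsWithin (2 / π) (Set.Ioi (2 / π))) (nhds (6 / π)) := by
  have hπ : 0 < π := Real.pi_pos
  have hπ32 : π < 3.2 := by linarith [Real.pi_lt_d2]
  have hπ3 : 3 < π := Real.pi_gt_three
  have hπ315 : π < 3.15 := by linarith [Real.pi_lt_d2]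
  have hπ2 : π ^ 2 < 10 := by nlinarith
  set L := nhdsWithin (2 / π) (Set.Ioi (2 / π)) with hL
  have h2π1 : 2 / π < 1 := by rw [div_lt_one hπ]; linarith
  -- eventual facts
  have hev : ∀ᶠ b in L, 2 / π < b ∧ b < 1 := by
    filter_upwards [self_mem_nhdsWithin, nhdsWithin_le_nhds (eventually_lt_nhds h2π1)]
      with b h1 h2
    exact ⟨h1, h2⟩
  have hkey : ∀ᶠ b in L, 0 < l b ∧ l b < b ∧
      12 * (b * π - 2) < (l b) ^ 2 * (b * π ^ 3) ∧
      (l b) ^ 2 * (b * π ^ 3) * (1 - π ^ 2 * (l b) ^ 2 / 10) < 12 * (b * π - 2) := by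
    filter_upwards [hev] with b ⟨hb1, hb2⟩
    obtain ⟨hx, heq⟩ := hl b hb1
    obtain ⟨h1, h2, h3⟩ := key hb1 hb2 hx heq
    exact ⟨hx, h1, h2, h3⟩
  -- Part 1 : l → 0
  set K : ℝ := 60 / (π * (10 - π ^ 2)) with hK
  have hKpos : 0 < K := by
    apply div_pos (by norm_num)
    apply mul_pos hπ
    linarith
  have hbound : ∀ᶠ b in L, 0 ≤ l b ∧ l b ≤ Real.sqrt (K * (b - 2 / π)) := by
    filter_upwards [hev, hkey] with b ⟨hb1, hb2⟩ ⟨hx, hxb, _, hB⟩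
    have hb0 : 0 < b := lt_trans (by positivity) hb1
    refine ⟨hx.le, ?_⟩
    -- from hB deduce (l b)^2 < K * (b - 2/π)
    have hx1 : l b < 1 := hxb.trans hb2
    have hx2 : (l b) ^ 2 < 1 := by nlinarith
    have hfac : 1 - π ^ 2 * (l b) ^ 2 / 10 > (10 - π ^ 2) / 10 := by
      nlinarith [mul_lt_mul_of_pos_left hx2 (show (0:ℝ) < π ^ 2 by positivity)]
    have hbp : b * π ^ 3 > 2 * π ^ 2 := by
      have : 2 / π * π = 2 := by field_simp
      nlinarith
    have hsub : b * π - 2 = (b - 2 / π) * π := by field_simp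
    have hlt : (l b) ^ 2 * (2 * π ^ 2) * ((10 - π ^ 2) / 10) < 12 * ((b - 2 / π) * π) := by
      rw [← hsub]
      calc (l b) ^ 2 * (2 * π ^ 2) * ((10 - π ^ 2) / 10)
          ≤ (l b) ^ 2 * (b * π ^ 3) * (1 - π ^ 2 * (l b) ^ 2 / 10) := by
            apply mul_le_mul (by nlinarith [sq_nonneg (l b), hbp]) hfac.le (by linarith)
              (mul_nonneg (sq_nonneg _) (mul_nonneg hb0.le (by positivity)))
      _ < 12 * (b * π - 2) := hB
    have hsq : (l b) ^ 2 < K * (b - 2 / π) := by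
      rw [hK]
      rw [div_mul_eq_mul_div, lt_div_iff₀ (by nlinarith : (0:ℝ) < π * (10 - π ^ 2))]
      nlinarith [hlt]
    calc l b = Real.sqrt ((l b) ^ 2) := (Real.sqrt_sq hx.le).symm
    _ ≤ Real.sqrt (K * (b - 2 / π)) := Real.sqrt_le_sqrt hsq.le
  have hid : Filter.Tendsto (fun b : ℝ => b) L (nhds (2 / π)) :=
    Filter.tendsto_id.mono_right nhdsWithin_le_nhds
  have ht0 : Filter.Tendsto (fun b : ℝ => Real.sqrt (K * (b - 2 / π))) L (nhds 0) := by
    have h1 : Filter.Tendsto (fun b : ℝ => K * (b - 2 / π)) L (nhds (K * (2 / π - 2 / π))) :=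
      ((hid.sub tendsto_const_nhds).const_mul K)
    have h2 : Filter.Tendsto (fun b : ℝ => K * (b - 2 / π)) L (nhds 0) := by
      simpa using h1
    simpa using h2.sqrt
  have part1 : Filter.Tendsto l L (nhds 0) := by
    apply tendsto_of_tendsto_of_tendsto_of_le_of_le' tendsto_const_nhds ht0
    · filter_upwards [hbound] with b hb using hb.1
    · filter_upwards [hbound] with b hb using hb.2
  refine ⟨part1, ?_⟩
  -- Part 2
  have hlow : ∀ᶠ b in L, 12 / (b * π ^ 2) ≤ (l b) ^ 2 / (b - 2 / π) := by
    filter_upwards [hev, hkey] with b ⟨hb1, hb2⟩ ⟨hx, hxb, hA, _⟩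
    have hb0 : 0 < b := lt_trans (by positivity) hb1
    have hbsub : 0 < b - 2 / π := sub_pos.2 hb1
    rw [div_le_div_iff₀ (by positivity) hbsub]
    have hsub : b * π - 2 = (b - 2 / π) * π := by field_simp
    rw [hsub] at hA
    refine le_of_lt (lt_of_mul_lt_mul_right ?_ hπ.le)
    linear_combination hA
  have hhigh : ∀ᶠ b in L, (l b) ^ 2 / (b - 2 / π) ≤
      12 / (b * π ^ 2 * (1 - π ^ 2 * (l b) ^ 2 / 10)) := by
    filter_upwards [hev, hkey] with b ⟨hb1, hb2⟩ ⟨hx, hxb, _, hB⟩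
    have hb0 : 0 < b := lt_trans (by positivity) hb1
    have hbsub : 0 < b - 2 / π := sub_pos.2 hb1
    have hfac : 0 < 1 - π ^ 2 * (l b) ^ 2 / 10 := by nlinarith
    rw [div_le_div_iff₀ hbsub (by positivity)]
    have hsub : b * π - 2 = (b - 2 / π) * π := by field_simp
    rw [hsub] at hB
    refine le_of_lt (lt_of_mul_lt_mul_right ?_ hπ.le)
    linear_combination hB
  have hlowT : Filter.Tendsto (fun b : ℝ => 12 / (b * π ^ 2)) L (nhds (6 / π)) := by
    have h1 : Filter.Tendsto (fun b : ℝ => b * π ^ 2) L (nhds (2 / π * π ^ 2)) :=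
      hid.mul_const (π ^ 2)
    have hne : 2 / π * π ^ 2 ≠ 0 := by positivity
    have h2 := (tendsto_const_nhds : Filter.Tendsto (fun _ : ℝ => (12:ℝ)) L _).div h1 hne
    have hval : 12 / (2 / π * π ^ 2) = 6 / π := by
      rw [div_eq_div_iff (by positivity) hπ.ne']
      field_simp
      ring
    rwa [hval] at h2
  have hhighT : Filter.Tendsto (fun b : ℝ => 12 / (b * π ^ 2 * (1 - π ^ 2 * (l b) ^ 2 / 10)))
      L (nhds (6 / π)) := by
    have hsq : Filter.Tendsto (fun b : ℝ => (l b) ^ 2) L (nhds 0) := by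
      have := part1.pow 2
      simpa using this
    have hden : Filter.Tendsto (fun b : ℝ => b * π ^ 2 * (1 - π ^ 2 * (l b) ^ 2 / 10)) L
        (nhds (2 / π * π ^ 2 * (1 - π ^ 2 * 0 / 10))) :=
      (hid.mul_const (π ^ 2)).mul
        (tendsto_const_nhds.sub ((hsq.const_mul (π ^ 2)).div_const 10))
    have hval : 2 / π * π ^ 2 * (1 - π ^ 2 * 0 / 10) = 2 * π := by field_simp; ring
    rw [hval] at hden
    have hne : (2 : ℝ) * π ≠ 0 := by positivity
    have h2 := (tendsto_const_nhds : Filter.Tendsto (fun _ : ℝ => (12:ℝ)) L _).div hden hne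
    have hval2 : (12 : ℝ) / (2 * π) = 6 / π := by
      rw [div_eq_div_iff (by positivity) hπ.ne']; ring
    rwa [hval2] at h2
  exact tendsto_of_tendsto_of_tendsto_of_le_of_le' hlowT hhighT hlow hhigh
end

section
/- Suppose f, B, δ are smooth functions on (0, π/2) satisfying the static constraint cot(x)·B' + B/sin²x + (1 + B·cos²x)·(cos x·f' − sin x·f)² − 2f² = 0. Define m(x) = −B(x)·tan(x) + (sin³x/cos x)·f(x)². Then m'(x) = ρ(x)·sin²x, where ρ = f'² + f² + B·(cos x·f' − sin x·f)² (the static energy density). -/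
open Real

/-- Renormalized mass identity: if f, B, δ are smooth on (0, π/2) and satisfy the
static constraint, then m(x) = −B tan x + (sin³x/cos x) f² satisfies
m' = ρ sin²x with ρ = f'² + f² + B (cos x f' − sin x f)². -/
theorem stmt_19 (f B δ : ℝ → ℝ)
    (hf : ContDiffOn ℝ (⊤ : ℕ∞) f (Set.Ioo 0 (π / 2)))
    (hB : ContDiffOn ℝ (⊤ : ℕ∞) B (Set.Ioo 0 (π / 2)))
    (hδ : ContDiffOn ℝ (⊤ : ℕ∞) δ (Set.Ioo 0 (π / 2)))
    (hconstraint : ∀ x ∈ Set.Ioo 0 (π / 2),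
      (Real.cos x / Real.sin x) * deriv B x + B x / Real.sin x ^ 2
        + (1 + B x * Real.cos x ^ 2) * (Real.cos x * deriv f x - Real.sin x * f x) ^ 2
        - 2 * f x ^ 2 = 0)
    (m : ℝ → ℝ)
    (hm : ∀ x, m x = -B x * Real.tan x + (Real.sin x ^ 3 / Real.cos x) * f x ^ 2) :
    ∀ x ∈ Set.Ioo 0 (π / 2),
      deriv m x = ((deriv f x) ^ 2 + f x ^ 2
          + B x * (Real.cos x * deriv f x - Real.sin x * f x) ^ 2) * Real.sin x ^ 2 := by
  intro x hx
  obtain ⟨hx0, hx2⟩ := hx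
  have hs : Real.sin x > 0 := Real.sin_pos_of_pos_of_lt_pi hx0 (by linarith [Real.pi_pos])
  have hc : Real.cos x > 0 := Real.cos_pos_of_mem_Ioo ⟨by linarith [Real.pi_pos], hx2⟩
  have hc' : Real.cos x ≠ 0 := ne_of_gt hc
  have hs' : Real.sin x ≠ 0 := ne_of_gt hs
  have hmem : Set.Ioo 0 (π/2) ∈ nhds x := isOpen_Ioo.mem_nhds ⟨hx0, hx2⟩
  have hfd : HasDerivAt f (deriv f x) x :=
    (((hf.differentiableOn (by simp)) x ⟨hx0, hx2⟩).differentiableAt hmem).hasDerivAt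
  have hBd : HasDerivAt B (deriv B x) x :=
    (((hB.differentiableOn (by simp)) x ⟨hx0, hx2⟩).differentiableAt hmem).hasDerivAt
  have hcon := hconstraint x ⟨hx0, hx2⟩
  have hg : HasDerivAt (fun y => -B y * Real.tan y + (Real.sin y ^ 3 / Real.cos y) * f y ^ 2)
      (((-deriv B x) * Real.tan x + (-B x) * (1 / Real.cos x ^ 2)) +
        (((3 * Real.sin x ^ 2 * Real.cos x * Real.cos x - Real.sin x ^ 3 * (-Real.sin x)) / Real.cos x ^ 2) * f x ^ 2
          + (Real.sin x ^ 3 / Real.cos x) * (2 * f x ^ 1 * deriv f x))) x := by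
    exact (hBd.neg.mul (Real.hasDerivAt_tan hc')).add
      ((((Real.hasDerivAt_sin x).pow 3).div (Real.hasDerivAt_cos x) hc').mul (hfd.pow 2))
  have hmg : m = fun y => -B y * Real.tan y + (Real.sin y ^ 3 / Real.cos y) * f y ^ 2 :=
    funext hm
  rw [hmg, hg.deriv, Real.tan_eq_sin_div_cos]
  have hpy := Real.sin_sq_add_cos_sq x
  field_simp at hcon
  field_simp
  apply mul_left_cancel₀ hs'
  linear_combination (-(Real.sin x)) * hcon + (2 * Real.sin x ^ 3 * f x ^ 2) * hpy
end
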